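/- Let k ≥ 1 be an integer, h ≠ 0 a real number, t₀ ∈ ℝ, and let u₀, u₁, …, u_k ∈ ℝ. Let L be the Lagrange interpolation polynomial of degree at most k through the equidistant points (t₀ + i·h, u_i), i = 0, …, k. Then the derivative of L at t₀ equals (1/h)·∑_{i=0}^k α_i^k u_i, where α_0^k = −∑_{j=1}^k 1/j and α_i^k = (−1)^{i−1}·binom(k,i)/i for 1 ≤ i ≤ k. -/

import Mathlib

/-- The coefficients `α_i^k` of the equidistant derivative approximation:
`α_0^k = -∑_{j=1}^k 1/j` and `α_i^k = (-1)^(i-1) * binom(k,i) / i` for `1 ≤ i ≤ k`. -/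
noncomputable def alphaCoef (k i : ℕ) : ℝ :=
  if i = 0 then -(∑ j ∈ Finset.Icc 1 k, (1 : ℝ) / j)
  else (-1) ^ (i - 1) * (Nat.choose k i : ℝ) / i

/-!
The Lagrange basis polynomial `ℓ_i` is the product of the linear factors
`(X - x_j) / (x_i - x_j)`, `j ≠ i`. Differentiate by the product rule at the node `x₀ = t₀`.
For `i = 0` every factor equals `1` at `x₀`, so `ℓ₀'(x₀) = ∑_{j ≠ 0} 1 / (x₀ - x_j)`, which for
`x_j = t₀ + j h` is `-(1/h) ∑_{j=1}^k 1/j`. For `i ≠ 0` the factor with `j = 0` vanishes at `x₀`,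
so only its own derivative `1 / (x_i - x₀) = 1 / (i h)` survives, multiplied by the remaining
factors `l / (l - i)`, `l ∉ {0, i}`. Their product is `(-1)^(i-1)` over `l < i` and
`binom(k, i)` over `l > i`.
-/

open Finset Polynomial

namespace Lagrange

variable {F ι : Type*} [Field F] [DecidableEq ι] {s : Finset ι} {v : ι → F} {i j : ι}

theorem derivative_basisDivisor (x y : F) : derivative (basisDivisor x y) = C (x - y)⁻¹ := by
  simp [basisDivisor]

theorem basis_eq_basisDivisor_mul_basis_erase (hij : i ≠ j) (hj : j ∈ s) :
    Lagrange.basis s v i = basisDivisor (v i) (v j) * Lagrange.basis (s.erase j) v i := by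
  rw [Lagrange.basis, Lagrange.basis, erase_right_comm]
  exact (mul_prod_erase _ (fun l => basisDivisor (v i) (v l)) (mem_erase.2 ⟨hij.symm, hj⟩)).symm

theorem eval_derivative_basis_self (hvs : Set.InjOn v s) (hi : i ∈ s) :
    (derivative (Lagrange.basis s v i)).eval (v i) = ∑ j ∈ s.erase i, (v i - v j)⁻¹ := by
  rw [Lagrange.basis, derivative_prod_finset, eval_finsetSum]
  refine sum_congr rfl fun j hj => ?_
  have hi' : i ∈ s.erase j := mem_erase.2 ⟨(ne_of_mem_erase hj).symm, hi⟩
  rw [eval_mul, derivative_basisDivisor, eval_C, erase_right_comm, ← Lagrange.basis,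
    eval_basis_self (hvs.mono (erase_subset j s)) hi', one_mul]

theorem eval_derivative_basis_of_ne (hij : i ≠ j) (hj : j ∈ s) :
    (derivative (Lagrange.basis s v i)).eval (v j) =
      (v i - v j)⁻¹ * (Lagrange.basis (s.erase j) v i).eval (v j) := by
  rw [basis_eq_basisDivisor_mul_basis_erase hij hj, derivative_mul, eval_add, eval_mul, eval_mul,
    eval_basisDivisor_right, derivative_basisDivisor, eval_C, zero_mul, add_zero]

theorem eval_basisDivisor_add_mul {t₀ h : F} (hh : h ≠ 0) (a b c : F) :
    (basisDivisor (t₀ + b * h) (t₀ + c * h)).eval (t₀ + a * h) = (a - c) / (b - c) := by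
  simp only [basisDivisor, eval_mul, eval_C, eval_sub, eval_X]
  rw [add_sub_add_left_eq_sub, add_sub_add_left_eq_sub, ← sub_mul, ← sub_mul, mul_inv,
    div_eq_inv_mul, mul_mul_mul_comm, inv_mul_cancel₀ hh, mul_one]

end Lagrange

section CharZero

variable {K : Type*} [Field K] [CharZero K]

theorem add_natCast_mul_injective {t₀ h : K} (hh : h ≠ 0) :
    Function.Injective fun n : ℕ => t₀ + n * h :=
  fun a b hab => by simpa [hh] using hab

theorem prod_Ico_one_div_sub_self (i : ℕ) :
    ∏ l ∈ Ico 1 i, (l : K) / (l - i) = (-1) ^ (i - 1) := by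
  have hreflect : ∏ l ∈ Ico 1 i, ((i : K) - l) = ∏ l ∈ Ico 1 i, (l : K) := by
    have h := prod_Ico_reflect (fun l : ℕ => (l : K)) 1 (Nat.le_succ i)
    rw [Nat.add_sub_cancel_left, Nat.add_sub_cancel] at h
    rw [← h]
    refine prod_congr rfl fun l hl => ?_
    rw [Nat.cast_sub (mem_Ico.1 hl).2.le]
  have hne : ∏ l ∈ Ico 1 i, (l : K) ≠ 0 :=
    prod_ne_zero_iff.2 fun l hl => Nat.cast_ne_zero.2 (by grind)
  calc ∏ l ∈ Ico 1 i, (l : K) / (l - i)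
      = ∏ l ∈ Ico 1 i, (-1) * ((l : K) / (i - l)) :=
        prod_congr rfl fun l _ => by rw [← neg_sub, div_neg, neg_one_mul]
    _ = (-1) ^ (i - 1) := by
        rw [prod_mul_distrib, prod_const, Nat.card_Ico, prod_div_distrib, hreflect,
          div_self hne, mul_one]

theorem prod_Ioc_div_sub_self {i k : ℕ} (hik : i ≤ k) :
    ∏ l ∈ Ioc i k, (l : K) / (l - i) = k.choose i := by
  induction k, hik using Nat.le_induction with
  | base => simp
  | succ k hik ih =>
    have hchoose : (k.choose i : K) * (k + 1) = (k + 1).choose i * (k + 1 - i) := by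
      have h := congrArg (Nat.cast : ℕ → K) (Nat.choose_mul_succ_eq k i)
      push_cast [Nat.cast_sub (hik.trans k.le_succ)] at h
      exact h
    have hne : (k : K) + 1 - i ≠ 0 := by
      rw [← Nat.cast_add_one, ← Nat.cast_sub (hik.trans k.le_succ)]
      exact Nat.cast_ne_zero.2 (by omega)
    rw [prod_Ioc_succ_top hik, ih]
    push_cast
    rw [mul_div_assoc', div_eq_iff hne, hchoose]

end CharZero

section Equidistant

variable {t₀ h : ℝ}

theorem range_add_one_erase_zero (k : ℕ) : (range (k + 1)).erase 0 = Icc 1 k := by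
  ext; simp only [mem_erase, mem_range, mem_Icc]; omega

theorem eval_derivative_basis_equidistant_zero (hh : h ≠ 0) (k : ℕ) :
    (derivative (Lagrange.basis (range (k + 1)) (fun n : ℕ => t₀ + n * h) 0)).eval t₀ =
      alphaCoef k 0 / h := by
  have h_self := Lagrange.eval_derivative_basis_self (add_natCast_mul_injective (t₀ := t₀) hh).injOn
    (mem_range.2 k.succ_pos)
  rw [Nat.cast_zero, zero_mul, add_zero] at h_self
  rw [h_self, range_add_one_erase_zero, alphaCoef, if_pos rfl, neg_div, sum_div,
    ← sum_neg_distrib]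
  refine sum_congr rfl fun j hj => ?_
  have hj₀ : (j : ℝ) ≠ 0 := Nat.cast_ne_zero.2 (by grind)
  field_simp
  ring

theorem eval_derivative_basis_equidistant_of_ne_zero (hh : h ≠ 0) {k i : ℕ} (hi₀ : i ≠ 0)
    (hik : i ≤ k) :
    (derivative (Lagrange.basis (range (k + 1)) (fun n : ℕ => t₀ + n * h) i)).eval t₀ =
      alphaCoef k i / h := by
  have h_ne := Lagrange.eval_derivative_basis_of_ne (v := fun n : ℕ => t₀ + n * h) hi₀
    (mem_range.2 k.succ_pos)
  simp only [Nat.cast_zero, zero_mul, add_zero] at h_ne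
  have hsplit : ((range (k + 1)).erase 0).erase i = Ico 1 i ∪ Ioc i k := by
    ext; simp only [mem_erase, mem_range, mem_union, mem_Ico, mem_Ioc]; omega
  have hdisj : Disjoint (Ico 1 i) (Ioc i k) := disjoint_left.2 fun l => by grind
  have hprod : (Lagrange.basis ((range (k + 1)).erase 0) (fun n : ℕ => t₀ + n * h) i).eval t₀ =
      (-1) ^ (i - 1) * k.choose i := by
    rw [Lagrange.basis, eval_prod, hsplit, ← prod_Ico_one_div_sub_self i,
      ← prod_Ioc_div_sub_self hik, ← prod_union (M := ℝ) hdisj]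
    refine prod_congr rfl fun l _ => ?_
    have h_eval := Lagrange.eval_basisDivisor_add_mul (t₀ := t₀) hh 0 i l
    rw [zero_mul, add_zero] at h_eval
    rw [h_eval, zero_sub, neg_div, ← div_neg, neg_sub]
  rw [h_ne, hprod, alphaCoef, if_neg hi₀, add_sub_cancel_left]
  ring

end Equidistant

theorem deriv_lagrange_equidistant (k : ℕ) (h : ℝ) (hh : h ≠ 0)
    (t₀ : ℝ) (u : ℕ → ℝ) :
    (Polynomial.derivative
        (Lagrange.interpolate (Finset.range (k + 1)) (fun i => t₀ + (i : ℝ) * h) u)).eval t₀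
      = (1 / h) * ∑ i ∈ Finset.range (k + 1), alphaCoef k i * u i := by
  rw [Lagrange.interpolate_apply, map_sum, eval_finsetSum, mul_sum]
  refine sum_congr rfl fun i hi => ?_
  have h_basis : (derivative (Lagrange.basis (range (k + 1)) (fun n : ℕ => t₀ + n * h) i)).eval t₀ =
      alphaCoef k i / h := by
    rcases eq_or_ne i 0 with rfl | hi₀
    · exact eval_derivative_basis_equidistant_zero hh k
    · exact eval_derivative_basis_equidistant_of_ne_zero hh hi₀ (Nat.lt_succ_iff.1 (mem_range.1 hi))
  rw [derivative_C_mul, eval_mul, eval_C, h_basis]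
  ring
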